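/- Let Ω be a compact metric space, T : Ω → Ω a homeomorphism, μ a T-ergodic Borel probability measure, and ω₀ ∈ Ω. Suppose a bounded measurable f : Ω → ℝ has two distinct essential limits l₁ ≠ l₂ at ω₀ and f is continuous at Tⁿω₀ for all n < 0. Then there exist two sequences V₁, V₂ in the topological support of the push-forward measure ν on ℝ^ℤ (induced by ω ↦ (f(Tⁿω))ₙ) such that V₁(n) = V₂(n) for all n < 0 but V₁(0) = l₁ ≠ l₂ = V₂(0). -/
import Mathlib


open MeasureTheory Filter

/-- `l` is an essential limit of `f` at `ω₀` with respect to `μ`: there is a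
sequence of sets of positive measure such that any choice of points from these
sets converges to `ω₀` and whose `f`-images converge to `l`. -/
def IsEssentialLimit {Ω : Type*} [TopologicalSpace Ω] [MeasurableSpace Ω]
    (μ : Measure Ω) (f : Ω → ℝ) (ω₀ : Ω) (l : ℝ) : Prop :=
  ∃ Ωk : ℕ → Set Ω, (∀ k, 0 < μ (Ωk k)) ∧
    ∀ ω : ℕ → Ω, (∀ k, ω k ∈ Ωk k) →
      Tendsto ω atTop (nhds ω₀) ∧ Tendsto (fun k => f (ω k)) atTop (nhds l)

/-- The topological support of a measure. -/
def measSupport {X : Type*} [TopologicalSpace X] [MeasurableSpace X]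
    (ν : Measure X) : Set X :=
  {x | ∀ U : Set X, IsOpen U → x ∈ U → 0 < ν U}

lemma isClosed_measSupport {X : Type*} [TopologicalSpace X] [MeasurableSpace X]
    (ν : Measure X) : IsClosed (measSupport ν) := by
  rw [← isOpen_compl_iff, isOpen_iff_forall_mem_open]
  intro x hx
  simp only [measSupport, Set.mem_compl_iff, Set.mem_setOf_eq, not_forall] at hx
  obtain ⟨U, hU, hxU, hνU⟩ := hx
  exact ⟨U, fun y hy h => hνU (h U hU hy), hU, hxU⟩

lemma measSupport_compl_null {X : Type*} [TopologicalSpace X] [MeasurableSpace X]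
    [SecondCountableTopology X] (ν : Measure X) : ν (measSupport ν)ᶜ = 0 := by
  obtain ⟨Ts, hTc, hTsub, hTeq⟩ :=
    TopologicalSpace.isOpen_sUnion_countable {U : Set X | IsOpen U ∧ ν U = 0}
      (fun U hU => hU.1)
  have hsub : (measSupport ν)ᶜ ⊆ ⋃₀ Ts := by
    rw [hTeq]
    intro x hx
    simp only [measSupport, Set.mem_compl_iff, Set.mem_setOf_eq, not_forall] at hx
    obtain ⟨U, hU, hxU, hνU⟩ := hx
    exact ⟨U, ⟨hU, by simpa using hνU⟩, hxU⟩
  refine measure_mono_null hsub ?_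
  exact (measure_sUnion_null_iff hTc).2 fun t ht => (hTsub ht).2

theorem essential_discontinuity_two_supports
    {Ω : Type*} [MetricSpace Ω] [CompactSpace Ω] [MeasurableSpace Ω]
    [BorelSpace Ω]
    (T : Ω ≃ₜ Ω) (μ : Measure Ω) [IsProbabilityMeasure μ]
    (hErg : Ergodic (⇑T) μ)
    (f : Ω → ℝ) (hfm : Measurable f) (hfb : ∃ C : ℝ, ∀ ω, |f ω| ≤ C)
    (ω₀ : Ω) (l₁ l₂ : ℝ) (hne : l₁ ≠ l₂)
    (h₁ : IsEssentialLimit μ f ω₀ l₁) (h₂ : IsEssentialLimit μ f ω₀ l₂)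
    (hcont : ∀ n : ℤ, n < 0 → ContinuousAt f ((T.toEquiv ^ n) ω₀)) :
    ∃ V₁ V₂ : ℤ → ℝ,
      V₁ ∈ measSupport (μ.map (fun ω => fun n : ℤ => f ((T.toEquiv ^ n) ω))) ∧
      V₂ ∈ measSupport (μ.map (fun ω => fun n : ℤ => f ((T.toEquiv ^ n) ω))) ∧
      (∀ n : ℤ, n < 0 → V₁ n = V₂ n) ∧ V₁ 0 = l₁ ∧ V₂ 0 = l₂ := by
  obtain ⟨C, hC⟩ := hfb
  -- continuity of integer powers of T
  have hTn : ∀ n : ℤ, Continuous fun ω => (T.toEquiv ^ n) ω := by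
    intro n
    cases n with
    | ofNat m =>
      have : (fun ω => (T.toEquiv ^ (Int.ofNat m)) ω) = (⇑T)^[m] := by
        rw [Int.ofNat_eq_coe, zpow_natCast]
        ext ω
        simp only [← Equiv.Perm.iterate_eq_pow]
        rfl
      rw [this]
      exact T.continuous.iterate m
    | negSucc m =>
      have : (fun ω => (T.toEquiv ^ (Int.negSucc m)) ω) = (⇑T.symm)^[m + 1] := by
        rw [zpow_negSucc, ← inv_pow]
        ext ω
        simp only [← Equiv.Perm.iterate_eq_pow]
        rfl
      rw [this]
      exact T.symm.continuous.iterate (m + 1)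
  set Φ : Ω → ℤ → ℝ := fun ω => fun n : ℤ => f ((T.toEquiv ^ n) ω) with hΦdef
  have hΦm : Measurable Φ :=
    measurable_pi_lambda _ fun n => hfm.comp (hTn n).measurable
  set ν : Measure (ℤ → ℝ) := μ.map Φ with hνdef
  -- a.e. ω, Φ ω is in the support of ν
  have hSc : MeasurableSet (measSupport ν) := (isClosed_measSupport ν).measurableSet
  have hae : μ (Φ ⁻¹' (measSupport ν))ᶜ = 0 := by
    have := measSupport_compl_null ν
    rwa [hνdef, Measure.map_apply hΦm hSc.compl] at this
  -- from an essential limit, produce a point of the support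
  have key : ∀ l : ℝ, IsEssentialLimit μ f ω₀ l →
      ∃ V : ℤ → ℝ, V ∈ measSupport ν ∧ V 0 = l ∧
        ∀ n : ℤ, n < 0 → V n = f ((T.toEquiv ^ n) ω₀) := by
    intro l hl
    obtain ⟨Ωk, hpos, hconv⟩ := hl
    have hpick : ∀ k, ∃ ω, ω ∈ Ωk k ∧ Φ ω ∈ measSupport ν := by
      intro k
      by_contra h
      push_neg at h
      have hsub : Ωk k ⊆ (Φ ⁻¹' (measSupport ν))ᶜ := fun ω hω h' => h ω hω h'
      exact (hpos k).ne' (measure_mono_null hsub hae)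
    choose ω hωmem hωsupp using hpick
    obtain ⟨hω₀, hωl⟩ := hconv ω hωmem
    -- compactness: extract a convergent subsequence of Φ ∘ ω
    have hcs : IsCompact (Set.univ.pi fun _ : ℤ => Set.Icc (-C) C) :=
      isCompact_univ_pi fun _ => isCompact_Icc
    have hmem : ∀ k, Φ (ω k) ∈ Set.univ.pi fun _ : ℤ => Set.Icc (-C) C := by
      intro k
      intro n _
      exact abs_le.mp (hC _)
    obtain ⟨V, _, φ, hφ, hlim⟩ := hcs.tendsto_subseq hmem
    refine ⟨V, ?_, ?_, ?_⟩
    · exact (isClosed_measSupport ν).mem_of_tendsto hlim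
        (Eventually.of_forall fun j => hωsupp (φ j))
    · -- coordinate 0
      have h1 : Tendsto (fun j => Φ (ω (φ j)) 0) atTop (nhds (V 0)) :=
        ((continuous_apply (0 : ℤ)).continuousAt.tendsto).comp hlim
      have h2 : Tendsto (fun j => Φ (ω (φ j)) 0) atTop (nhds l) := by
        have : (fun j => Φ (ω (φ j)) 0) = fun j => f (ω (φ j)) := by
          funext j; simp [hΦdef]
        rw [this]
        exact hωl.comp hφ.tendsto_atTop
      exact tendsto_nhds_unique h1 h2
    · intro n hn
      have h1 : Tendsto (fun j => Φ (ω (φ j)) n) atTop (nhds (V n)) :=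
        ((continuous_apply n).continuousAt.tendsto).comp hlim
      have h2 : Tendsto (fun j => Φ (ω (φ j)) n) atTop
          (nhds (f ((T.toEquiv ^ n) ω₀))) := by
        have hT : Tendsto (fun j => (T.toEquiv ^ n) (ω (φ j))) atTop
            (nhds ((T.toEquiv ^ n) ω₀)) :=
          ((hTn n).continuousAt.tendsto).comp (hω₀.comp hφ.tendsto_atTop)
        exact (hcont n hn).tendsto.comp hT
      exact tendsto_nhds_unique h1 h2
  obtain ⟨V₁, hV₁, hV₁0, hV₁neg⟩ := key l₁ h₁
  obtain ⟨V₂, hV₂, hV₂0, hV₂neg⟩ := key l₂ h₂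
  exact ⟨V₁, V₂, hV₁, hV₂, fun n hn => (hV₁neg n hn).trans (hV₂neg n hn).symm, hV₁0, hV₂0⟩
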